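/- arXiv:2605.03827 — 4 statements merged into one kernel-verified Lean document; each statement's English description precedes it below -/
import Mathlib

section
/- Let G be a DAG on X, let x, y ∈ X be distinct leaves, and let G' be the xy-extension of G (obtained by adding two new vertices u, v and arcs (u,x), (u,y), (v,x), (v,y)). Then G' is a DAG on X, the set LCA_{G'}({x,y}) has more than one element (so the LCA of x and y is not unique in G'), ancestry between vertices of G is preserved, and LCA_{G'}({a,b}) = LCA_G({a,b}) for all a, b ∈ X with {a,b} ≠ {x,y}. -/
section Preamble

variable {V : Type*}

/-- `v` is an ancestor-acyclicity condition: no directed cycle through any vertex. -/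
def dagAcyclic (E : V → V → Prop) : Prop := ∀ v, ¬ Relation.TransGen E v v

/-- A leaf is a vertex with out-degree zero. -/
def dagLeaf (E : V → V → Prop) (v : V) : Prop := ∀ w, ¬ E v w

/-- A root is a vertex with in-degree zero. -/
def dagRoot (E : V → V → Prop) (v : V) : Prop := ∀ w, ¬ E w v

/-- `v` is a common ancestor of the set `A`. -/
def commonAnc (E : V → V → Prop) (A : Set V) (v : V) : Prop :=
  ∀ a ∈ A, Relation.ReflTransGen E v a

/-- The set of least common ancestors of `A`: minimal common ancestors. -/
def LCAset (E : V → V → Prop) (A : Set V) : Set V :=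
  {v | commonAnc E A v ∧ ∀ w, Relation.TransGen E v w → ¬ commonAnc E A w}

/-- `v` is the unique least common ancestor of the (unordered) pair `p`. -/
def lcaIs (E : V → V → Prop) (p : Sym2 V) (v : V) : Prop :=
  LCAset E {x | x ∈ p} = {v}

/-- The LCA of `p` is well-defined. -/
def lcaDef (E : V → V → Prop) (p : Sym2 V) : Prop := ∃ v, lcaIs E p v

/-- Transitive closure of a relation given as a set of pairs. -/
def tcS {α : Type*} (R : Set (α × α)) : Set (α × α) :=
  {pq | Relation.TransGen (fun a b => (a, b) ∈ R) pq.1 pq.2}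

/-- The support of a relation. -/
def suppS {α : Type*} (R : Set (α × α)) : Set α :=
  {p | ∃ q, (p, q) ∈ R ∨ (q, p) ∈ R}

/-- Transitivity for a set-relation. -/
def isTransS {α : Type*} (S : Set (α × α)) : Prop :=
  ∀ p q r, (p, q) ∈ S → (q, r) ∈ S → (p, r) ∈ S

/-- `F`-conditional symmetry. -/
def fcsym {α : Type*} (F S : Set (α × α)) : Prop :=
  ∀ p q, (p, q) ∈ F → (p, q) ∈ S → (q, p) ∈ S

/-- Extended support: the support together with all singleton pairs `xx`, `x ∈ X`. -/
def suppPlus (X : Set V) (R : Set (Sym2 V × Sym2 V)) : Set (Sym2 V) :=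
  suppS R ∪ {p | ∃ x ∈ X, p = Sym2.diag x}

/-- Cross-consistency. -/
def crossCons (S : Set (Sym2 V × Sym2 V)) : Prop :=
  ∀ a b c d x y : V, s(a, b) ∈ suppS S → (s(a, c), s(x, y)) ∈ S → (s(b, d), s(x, y)) ∈ S →
    (s(a, b), s(x, y)) ∈ S

/-- The closure `cl_F(R)`: smallest `supp⁺_R`-reflexive, transitive, cross-consistent,
`F`-conditionally-symmetric relation containing `R`. -/
def clF (X : Set V) (F R : Set (Sym2 V × Sym2 V)) : Set (Sym2 V × Sym2 V) :=
  ⋂₀ {S | R ⊆ S ∧ (∀ p ∈ suppPlus X R, (p, p) ∈ S) ∧ isTransS S ∧ crossCons S ∧ fcsym F S}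

/-- A relation is on `P₂(X)`: all members of its pairs are taxa from `X`. -/
def onP2 (X : Set V) (R : Set (Sym2 V × Sym2 V)) : Prop :=
  ∀ pq ∈ R, (∀ z ∈ pq.1, z ∈ X) ∧ (∀ z ∈ pq.2, z ∈ X)

/-- `G` realizes `R` (conditions I1 and I2, with all LCAs on `supp⁺_R` well-defined). -/
def realizes (E : V → V → Prop) (X : Set V) (R : Set (Sym2 V × Sym2 V)) : Prop :=
  (∀ p ∈ suppPlus X R, lcaDef E p) ∧
  ∀ p q, (p, q) ∈ R →
    ((q, p) ∉ tcS R → ∃ u v, lcaIs E p u ∧ lcaIs E q v ∧ Relation.TransGen E v u) ∧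
    ((q, p) ∈ tcS R → ∃ u, lcaIs E p u ∧ lcaIs E q u)

/-- Condition (F): no forbidden strict LCA relationship is displayed. -/
def condF (E : V → V → Prop) (F : Set (Sym2 V × Sym2 V)) : Prop :=
  ∀ p q, (p, q) ∈ F → ∀ u v, lcaIs E p u → lcaIs E q v → ¬ Relation.TransGen E v u

/-- `G` RF-realizes the pair `(R, F)`. -/
def rfRealizes (E : V → V → Prop) (X : Set V) (R F : Set (Sym2 V × Sym2 V)) : Prop :=
  realizes E X R ∧ condF E F

end Preamble

/-- the `xy`-extension of a DAG `G` (new vertices `inr true`, `inr false`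
with arcs to the distinct leaves `x` and `y`) is a DAG on `X` in which the LCA of
`{x,y}` is not unique, ancestry between old vertices is preserved, and all other
LCA sets of leaf pairs are unchanged. -/
theorem stmt2 {V : Type*} [Finite V] (E : V → V → Prop) (X : Set V)
    (hacyc : dagAcyclic E) (hX : ∀ v, v ∈ X ↔ dagLeaf E v)
    (x y : V) (hx : x ∈ X) (hy : y ∈ X) (hxy : x ≠ y)
    (E' : V ⊕ Bool → V ⊕ Bool → Prop)
    (hE' : ∀ u v : V ⊕ Bool, E' u v ↔
      ((∃ a b : V, u = Sum.inl a ∧ v = Sum.inl b ∧ E a b) ∨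
        ((∃ i : Bool, u = Sum.inr i) ∧ (v = Sum.inl x ∨ v = Sum.inl y)))) :
    dagAcyclic E' ∧
    (∀ w : V ⊕ Bool, dagLeaf E' w ↔ ∃ z ∈ X, w = Sum.inl z) ∧
    (∃ w₁ w₂ : V ⊕ Bool, w₁ ≠ w₂ ∧
      w₁ ∈ LCAset E' {Sum.inl x, Sum.inl y} ∧ w₂ ∈ LCAset E' {Sum.inl x, Sum.inl y}) ∧
    (¬ lcaDef E' s(Sum.inl x, Sum.inl y)) ∧
    (∀ a b : V, Relation.ReflTransGen E a b ↔ Relation.ReflTransGen E' (Sum.inl a) (Sum.inl b)) ∧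
    (∀ a b : V, a ∈ X → b ∈ X → ({a, b} : Set V) ≠ {x, y} →
      LCAset E' {Sum.inl a, Sum.inl b} = Sum.inl '' LCAset E {a, b}) := by
    -- basic facts about E'
  have hstep_inl : ∀ (a : V) (w : V ⊕ Bool), E' (Sum.inl a) w → ∃ b, w = Sum.inl b ∧ E a b := by
    intro a w h
    rw [hE'] at h
    rcases h with ⟨a', b, ha, hb, hab⟩ | ⟨⟨i, hi⟩, _⟩
    · obtain rfl : a = a' := Sum.inl.inj ha
      exact ⟨b, hb, hab⟩
    · simp at hi
  have hstep_inr : ∀ (i : Bool) (w : V ⊕ Bool), E' (Sum.inr i) w →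
      w = Sum.inl x ∨ w = Sum.inl y := by
    intro i w h
    rw [hE'] at h
    rcases h with ⟨a', b, ha, _, _⟩ | ⟨_, hv⟩
    · simp at ha
    · exact hv
  have hedge : ∀ (i : Bool), E' (Sum.inr i) (Sum.inl x) ∧ E' (Sum.inr i) (Sum.inl y) := by
    intro i
    constructor <;> · rw [hE']; exact Or.inr ⟨⟨i, rfl⟩, by simp⟩
  have hembed : ∀ a b : V, E a b → E' (Sum.inl a) (Sum.inl b) := by
    intro a b h; rw [hE']; exact Or.inl ⟨a, b, rfl, rfl, h⟩
  have hrt_inl : ∀ (a : V) (w : V ⊕ Bool), Relation.ReflTransGen E' (Sum.inl a) w →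
      ∃ b, w = Sum.inl b ∧ Relation.ReflTransGen E a b := by
    intro a w h
    induction h with
    | refl => exact ⟨a, rfl, Relation.ReflTransGen.refl⟩
    | tail h1 h2 ih =>
      obtain ⟨c, rfl, hac⟩ := ih
      obtain ⟨b, rfl, hcb⟩ := hstep_inl c _ h2
      exact ⟨b, rfl, hac.tail hcb⟩
  have hrt_embed : ∀ a b : V, Relation.ReflTransGen E a b →
      Relation.ReflTransGen E' (Sum.inl a) (Sum.inl b) := by
    intro a b h
    induction h with
    | refl => exact Relation.ReflTransGen.refl
    | tail h1 h2 ih => exact ih.tail (hembed _ _ h2)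
  have hleafE' : ∀ z ∈ X, dagLeaf E' (Sum.inl z) := by
    intro z hz w hw
    obtain ⟨b, rfl, hb⟩ := hstep_inl z w hw
    exact (hX z).1 hz b hb
  have hleaf_rt : ∀ v w : V ⊕ Bool, dagLeaf E' v → Relation.ReflTransGen E' v w → w = v := by
    intro v w hl h
    rcases h.cases_head with h | ⟨c, hc, _⟩
    · exact h.symm
    · exact absurd hc (hl c)
  have hrt_inr : ∀ (i : Bool) (w : V ⊕ Bool), Relation.ReflTransGen E' (Sum.inr i) w →
      w = Sum.inr i ∨ w = Sum.inl x ∨ w = Sum.inl y := by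
    intro i w h
    rcases h.cases_head with h | ⟨c, hc, hcw⟩
    · exact Or.inl h.symm
    · rcases hstep_inr i c hc with rfl | rfl
      · exact Or.inr (Or.inl (hleaf_rt _ _ (hleafE' x hx) hcw))
      · exact Or.inr (Or.inr (hleaf_rt _ _ (hleafE' y hy) hcw))
  have htg_inl : ∀ (a : V) (w : V ⊕ Bool), Relation.TransGen E' (Sum.inl a) w →
      ∃ b, w = Sum.inl b ∧ Relation.TransGen E a b := by
    intro a w h
    obtain ⟨c, hac, hcw⟩ := Relation.TransGen.head'_iff.1 h
    obtain ⟨c', rfl, hac'⟩ := hstep_inl a c hac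
    obtain ⟨b, rfl, hcb⟩ := hrt_inl c' w hcw
    exact ⟨b, rfl, Relation.TransGen.head' hac' hcb⟩
  have htg_embed : ∀ a b : V, Relation.TransGen E a b →
      Relation.TransGen E' (Sum.inl a) (Sum.inl b) := by
    intro a b h
    induction h with
    | single h => exact Relation.TransGen.single (hembed _ _ h)
    | tail h1 h2 ih => exact ih.tail (hembed _ _ h2)
  -- acyclicity
  have hacyc' : dagAcyclic E' := by
    intro v h
    cases v with
    | inl a =>
      obtain ⟨b, hb, hab⟩ := htg_inl a _ h
      obtain rfl : a = b := Sum.inl.inj hb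
      exact hacyc a hab
    | inr i =>
      obtain ⟨c, hic, hci⟩ := Relation.TransGen.head'_iff.1 h
      rcases hstep_inr i c hic with rfl | rfl
      · simpa using hleaf_rt _ _ (hleafE' x hx) hci
      · simpa using hleaf_rt _ _ (hleafE' y hy) hci
  -- the two new vertices are both LCAs of {x,y}
  have hmem : ∀ i : Bool, Sum.inr i ∈ LCAset E' {Sum.inl x, Sum.inl y} := by
    intro i
    constructor
    · rintro z (rfl | rfl)
      · exact Relation.ReflTransGen.single (hedge i).1
      · exact Relation.ReflTransGen.single (hedge i).2
    · intro w hw hca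
      rcases hrt_inr i w hw.to_reflTransGen with rfl | rfl | rfl
      · exact hacyc' _ hw
      · have := hleaf_rt _ _ (hleafE' x hx) (hca (Sum.inl y) (by simp))
        simp only [Sum.inl.injEq] at this
        exact hxy this.symm
      · have := hleaf_rt _ _ (hleafE' y hy) (hca (Sum.inl x) (by simp))
        simp only [Sum.inl.injEq] at this
        exact hxy this
  refine ⟨hacyc', ?_, ⟨Sum.inr true, Sum.inr false, by simp, hmem true, hmem false⟩, ?_, ?_, ?_⟩
  · -- leaves
    intro w
    constructor
    · intro hl
      cases w with
      | inl z =>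
        refine ⟨z, (hX z).2 ?_, rfl⟩
        intro b hb
        exact hl _ (hembed z b hb)
      | inr i => exact absurd (hedge i).1 (hl _)
    · rintro ⟨z, hz, rfl⟩
      exact hleafE' z hz
  · -- LCA of {x,y} not unique
    rintro ⟨v, hv⟩
    have hset : {z | z ∈ s(Sum.inl x, Sum.inl y)} = ({Sum.inl x, Sum.inl y} : Set (V ⊕ Bool)) := by
      ext z; simp [Sym2.mem_iff]
    rw [lcaIs, hset] at hv
    have h1 : Sum.inr true = v := by
      have := hmem true; rw [hv] at this; exact this
    have h2 : Sum.inr false = v := by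
      have := hmem false; rw [hv] at this; exact this
    simp [← h1] at h2
  · -- ancestry preserved
    intro a b
    constructor
    · exact hrt_embed a b
    · intro h
      obtain ⟨c, hc, hac⟩ := hrt_inl a _ h
      obtain rfl : b = c := Sum.inl.inj hc
      exact hac
  · -- other LCA sets unchanged
    intro a b ha hb hne
    have hca_iff : ∀ c : V, commonAnc E' {Sum.inl a, Sum.inl b} (Sum.inl c) ↔
        commonAnc E {a, b} c := by
      intro c
      constructor
      · intro h z hz
        rcases hz with rfl | rfl
        · obtain ⟨d, hd, hcd⟩ := hrt_inl c _ (h (Sum.inl z) (Set.mem_insert _ _))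
          obtain rfl : z = d := Sum.inl.inj hd
          exact hcd
        · obtain ⟨d, hd, hcd⟩ := hrt_inl c _
            (h (Sum.inl z) (Set.mem_insert_iff.2 (Or.inr rfl)))
          obtain rfl : z = d := Sum.inl.inj hd
          exact hcd
      · intro h z hz
        rcases hz with rfl | rfl
        · exact hrt_embed _ _ (h _ (Set.mem_insert _ _))
        · exact hrt_embed _ _ (h _ (Set.mem_insert_iff.2 (Or.inr rfl)))
    ext w
    cases w with
    | inl c =>
      simp only [Set.mem_image, Sum.inl.injEq]
      constructor
      · rintro ⟨h1, h2⟩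
        refine ⟨c, ⟨(hca_iff c).1 h1, ?_⟩, rfl⟩
        intro d hd hcd
        exact h2 (Sum.inl d) (htg_embed _ _ hd) ((hca_iff d).2 hcd)
      · rintro ⟨c', ⟨h1, h2⟩, hcc⟩
        subst hcc
        refine ⟨(hca_iff c').2 h1, ?_⟩
        intro w hw hcw
        obtain ⟨d, rfl, hcd⟩ := htg_inl c' w hw
        exact h2 d hcd ((hca_iff d).1 hcw)
    | inr i =>
      simp only [Set.mem_image]
      constructor
      · rintro ⟨h1, h2⟩
        have haxy : a = x ∨ a = y := by
          rcases hrt_inr i _ (h1 (Sum.inl a) (Set.mem_insert _ _)) with h | h | h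
          · exact absurd h (by simp)
          · exact Or.inl (Sum.inl.inj h)
          · exact Or.inr (Sum.inl.inj h)
        have hbxy : b = x ∨ b = y := by
          rcases hrt_inr i _ (h1 (Sum.inl b)
              (Set.mem_insert_iff.2 (Or.inr rfl))) with h | h | h
          · exact absurd h (by simp)
          · exact Or.inl (Sum.inl.inj h)
          · exact Or.inr (Sum.inl.inj h)
        have hab : a = b := by
          rcases haxy with h1' | h1' <;> rcases hbxy with h2' | h2'
          · rw [h1', h2']
          · exact absurd (by rw [h1', h2']) hne
          · exact absurd (by rw [h1', h2']; exact Set.pair_comm y x) hne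
          · rw [h1', h2']
        have hed : E' (Sum.inr i) (Sum.inl a) := by
          rcases haxy with h' | h'
          · rw [h']; exact (hedge i).1
          · rw [h']; exact (hedge i).2
        refine absurd ?_ (h2 (Sum.inl a) (Relation.TransGen.single hed))
        intro z hz
        rcases hz with rfl | rfl
        · exact Relation.ReflTransGen.refl
        · rw [hab]
      · rintro ⟨c, _, hc⟩
        simp at hc
end

section
/- Let (R, F) be a pair of relations on P₂(X) such that (R,F) is RF-realized by some DAG G. Then (R,F) satisfies condition Y1: for all a, b, x ∈ X with ab ≠ xx, the pair (ab, xx) is not in cl_F(R). -/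
section Aux
variable {V : Type*}

/-- In a finite acyclic DAG, below any common ancestor there is a minimal one. -/
lemma exists_min_commonAnc [Finite V] (E : V → V → Prop) (hacyc : dagAcyclic E)
    (A : Set V) : ∀ w, commonAnc E A w → ∃ u ∈ LCAset E A, Relation.ReflTransGen E w u := by
  have hwf : WellFounded (fun a b => Relation.TransGen E b a) := by
    have : IsTrans V (fun a b => Relation.TransGen E b a) :=
      ⟨fun a b c h1 h2 => h2.trans h1⟩
    have : IsIrrefl V (fun a b => Relation.TransGen E b a) :=
      ⟨fun a h => hacyc a h⟩
    exact Finite.wellFounded_of_trans_of_irrefl _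
  intro w
  induction w using hwf.induction with
  | _ w ih =>
    intro hw
    by_cases hmin : ∀ w', Relation.TransGen E w w' → ¬ commonAnc E A w'
    · exact ⟨w, ⟨hw, hmin⟩, Relation.ReflTransGen.refl⟩
    · push_neg at hmin
      obtain ⟨w', hww', hw'⟩ := hmin
      obtain ⟨u, hu, hwu⟩ := ih w' hww' hw'
      exact ⟨u, hu, (hww'.to_reflTransGen).trans hwu⟩

lemma lcaIs_unique {E : V → V → Prop} {p : Sym2 V} {u v : V}
    (hu : lcaIs E p u) (hv : lcaIs E p v) : u = v := by
  have := hu.symm.trans hv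
  simpa using Set.singleton_eq_singleton_iff.mp this

lemma leaf_reach {E : V → V → Prop} {x u : V} (hx : dagLeaf E x)
    (h : Relation.ReflTransGen E x u) : u = x := by
  rcases h.cases_head with heq | ⟨c, he, _⟩
  · exact heq.symm
  · exact absurd he (hx _)

lemma lcaIs_diag_leaf {E : V → V → Prop} {x v : V} (hx : dagLeaf E x)
    (hv : lcaIs E (Sym2.diag x) v) : v = x := by
  have hmem : x ∈ LCAset E {y | y ∈ Sym2.diag x} := by
    constructor
    · intro a ha
      have : a = x := by
        have := Sym2.mem_iff.mp (show a ∈ Sym2.diag x from ha)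
        tauto
      subst this; exact Relation.ReflTransGen.refl
    · intro w hw _
      obtain ⟨c, he, _⟩ := Relation.TransGen.head'_iff.mp hw
      exact hx _ he
  rw [hv] at hmem
  exact (Set.mem_singleton_iff.mp hmem).symm

end Aux


/-- if `(R, F)` is RF-realized by some DAG `G`, then condition (Y1) holds:
for all `a, b, x ∈ X` with `ab ≠ xx`, the pair `(ab, xx)` is not in `cl_F(R)`. -/
theorem stmt11 {V : Type*} [Finite V] (E : V → V → Prop) (X : Set V)
    (hacyc : dagAcyclic E) (hX : ∀ v, v ∈ X ↔ dagLeaf E v)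
    (R F : Set (Sym2 V × Sym2 V)) (hR : onP2 X R) (hF : onP2 X F)
    (hreal : rfRealizes E X R F) :
    ∀ a b x : V, a ∈ X → b ∈ X → x ∈ X → s(a, b) ≠ s(x, x) →
      (s(a, b), s(x, x)) ∉ clF X F R := by
  intro a b x ha hb hx hne hmem
  obtain ⟨⟨hdef, hRI⟩, hcF⟩ := hreal
  set S : Set (Sym2 V × Sym2 V) :=
    {pq | ∃ u v, lcaIs E pq.1 u ∧ lcaIs E pq.2 v ∧ Relation.ReflTransGen E v u} with hSdef
  have hmemS : (s(a, b), s(x, x)) ∈ S := by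
    refine hmem S ⟨?_, ?_, ?_, ?_, ?_⟩
    · -- R ⊆ S
      intro pq hpq
      obtain ⟨h1, h2⟩ := hRI pq.1 pq.2 hpq
      by_cases htc : (pq.2, pq.1) ∈ tcS R
      · obtain ⟨u, hu1, hu2⟩ := h2 htc
        exact ⟨u, u, hu1, hu2, Relation.ReflTransGen.refl⟩
      · obtain ⟨u, v, hu, hv, huv⟩ := h1 htc
        exact ⟨u, v, hu, hv, huv.to_reflTransGen⟩
    · -- reflexive on suppPlus
      intro p hp
      obtain ⟨u, hu⟩ := hdef p hp
      exact ⟨u, u, hu, hu, Relation.ReflTransGen.refl⟩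
    · -- transitive
      rintro p q r ⟨u, v, hu, hv, hvu⟩ ⟨v', w, hv', hw, hwv'⟩
      exact ⟨u, w, hu, hw, (lcaIs_unique hv' hv ▸ hwv').trans hvu⟩
    · -- cross-consistent
      rintro a' b' c d x' y' hsupp ⟨u1, w1, h1, hw1, hr1⟩ ⟨u2, w2, h2, hw2, hr2⟩
      -- lcaDef for s(a', b')
      obtain ⟨q, hq⟩ := hsupp
      have hdefab : ∃ u, lcaIs E s(a', b') u := by
        rcases hq with hq | hq
        · obtain ⟨u, _, hu, _, _⟩ := hq; exact ⟨u, hu⟩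
        · obtain ⟨_, u, _, hu, _⟩ := hq; exact ⟨u, hu⟩
      obtain ⟨u, hu⟩ := hdefab
      have hw12 : w1 = w2 := lcaIs_unique hw1 hw2
      have hca1 : commonAnc E {z | z ∈ s(a', c)} u1 := by
        have : u1 ∈ LCAset E {z | z ∈ s(a', c)} := by rw [h1]; rfl
        exact this.1
      have hca2 : commonAnc E {z | z ∈ s(b', d)} u2 := by
        have : u2 ∈ LCAset E {z | z ∈ s(b', d)} := by rw [h2]; rfl
        exact this.1
      have hwca : commonAnc E {z | z ∈ s(a', b')} w1 := by
        intro z hz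
        rcases Sym2.mem_iff.mp hz with rfl | rfl
        · exact hr1.trans (hca1 z (Sym2.mem_mk_left _ _))
        · exact (hw12 ▸ hr2).trans (hca2 z (Sym2.mem_mk_left _ _))
      obtain ⟨u', hu', hwu'⟩ := exists_min_commonAnc E hacyc _ w1 hwca
      have : u' = u := by rw [hu] at hu'; exact hu'
      exact ⟨u, w1, hu, hw1, this ▸ hwu'⟩
    · -- F-conditional symmetry
      rintro p q hpqF ⟨u, v, hu, hv, hvu⟩
      rcases Relation.reflTransGen_iff_eq_or_transGen.mp hvu with heq | htg
      · exact ⟨v, u, hv, hu, heq ▸ Relation.ReflTransGen.refl⟩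
      · exact absurd htg (hcF p q hpqF u v hu hv)
  obtain ⟨u, v, hu, hv, hvu⟩ := hmemS
  have hxleaf : dagLeaf E x := (hX x).mp hx
  have hvx : v = x := by
    apply lcaIs_diag_leaf hxleaf
    have : s(x, x) = Sym2.diag x := rfl
    exact this ▸ hv
  have hux : u = x := leaf_reach hxleaf (hvx ▸ hvu)
  have hca : commonAnc E {z | z ∈ s(a, b)} u := by
    have : u ∈ LCAset E {z | z ∈ s(a, b)} := by rw [hu]; rfl
    exact this.1
  have hax : a = x := by
    have h := hca a (Sym2.mem_mk_left _ _)
    rw [hux] at h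
    exact leaf_reach hxleaf h
  have hbx : b = x := by
    have h := hca b (Sym2.mem_mk_right _ _)
    rw [hux] at h
    exact leaf_reach hxleaf h
  exact hne (by rw [hax, hbx])
end

section
/- Let (R, F) be a pair of relations on P₂(X) and let G be a DAG on X that RF-realizes (R, F|R). Then for all (ab, xy) ∈ cl_F(R), lca_G(ab) and lca_G(xy) are well-defined and lca_G(ab) ≼_G lca_G(xy). In particular, cl_F(R) ⊆ ⊴_G. -/
section Aux

variable {V : Type*}

/-- From any common ancestor one can descend to a least common ancestor. -/
lemma descend_to_lca [Finite V] (E : V → V → Prop) (hacyc : dagAcyclic E) (A : Set V) :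
    ∀ w, commonAnc E A w → ∃ v ∈ LCAset E A, Relation.ReflTransGen E w v := by
  have hwf : WellFounded (fun a b => Relation.TransGen E b a) := by
    haveI : IsTrans V (fun a b => Relation.TransGen E b a) := ⟨fun a b c h1 h2 => h2.trans h1⟩
    haveI : IsIrrefl V (fun a b => Relation.TransGen E b a) := ⟨fun a h => hacyc a h⟩
    exact Finite.wellFounded_of_trans_of_irrefl _
  intro w
  induction w using hwf.induction with
  | _ w ih =>
    intro hw
    by_cases h : ∀ w', Relation.TransGen E w w' → ¬ commonAnc E A w'
    · exact ⟨w, ⟨hw, h⟩, Relation.ReflTransGen.refl⟩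
    · push_neg at h
      obtain ⟨w', hww', hw'⟩ := h
      obtain ⟨v, hv, hrt⟩ := ih w' hww' hw'
      exact ⟨v, hv, hww'.to_reflTransGen.trans hrt⟩

/-- Any common ancestor lies above the (unique) lca. -/
lemma lca_below_commonAnc [Finite V] (E : V → V → Prop) (hacyc : dagAcyclic E)
    {p : Sym2 V} {v : V} (hv : lcaIs E p v) {w : V} (hw : commonAnc E {x | x ∈ p} w) :
    Relation.ReflTransGen E w v := by
  obtain ⟨v', hv', hrt⟩ := descend_to_lca E hacyc {x | x ∈ p} w hw
  rw [lcaIs] at hv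
  have : v' = v := by rw [hv] at hv'; exact hv'
  exact this ▸ hrt

lemma lcaIs_commonAnc {E : V → V → Prop} {p : Sym2 V} {v : V} (hv : lcaIs E p v) :
    commonAnc E {x | x ∈ p} v := by
  have : v ∈ LCAset E {x | x ∈ p} := by rw [lcaIs] at hv; rw [hv]; rfl
  exact this.1

end Aux

/-- if `G` RF-realizes `(R, F|R)`, then every `(ab, xy) ∈ cl_F(R)` has both
LCAs well-defined with `lca_G(ab) ≼_G lca_G(xy)`; in particular `cl_F(R) ⊆ ⊴_G`. -/
theorem stmt12 {V : Type*} [Finite V] (E : V → V → Prop) (X : Set V)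
    (hacyc : dagAcyclic E) (hX : ∀ v, v ∈ X ↔ dagLeaf E v)
    (R F : Set (Sym2 V × Sym2 V)) (hR : onP2 X R) (hF : onP2 X F)
    (hreal : rfRealizes E X R {pq ∈ F | pq.1 ∈ suppPlus X R ∧ pq.2 ∈ suppPlus X R}) :
    (∀ p q : Sym2 V, (p, q) ∈ clF X F R →
      ∃ u v, lcaIs E p u ∧ lcaIs E q v ∧ Relation.ReflTransGen E v u) ∧
    clF X F R ⊆
      {pq : Sym2 V × Sym2 V |
        ∃ u v, lcaIs E pq.1 u ∧ lcaIs E pq.2 v ∧ Relation.ReflTransGen E v u} := by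
  classical
  set T : Set (Sym2 V × Sym2 V) :=
    {pq | ∃ u v, lcaIs E pq.1 u ∧ lcaIs E pq.2 v ∧ Relation.ReflTransGen E v u} with hT
  set S : Set (Sym2 V × Sym2 V) :=
    {pq ∈ T | pq.1 ∈ suppPlus X R ∧ pq.2 ∈ suppPlus X R} with hS
  have hSsub : S ⊆ T := fun pq h => h.1
  obtain ⟨⟨hdef, hI⟩, hcF⟩ := hreal
  -- S contains R
  have hRS : R ⊆ S := by
    intro ⟨p, q⟩ hpq
    refine ⟨?_, Or.inl ⟨q, Or.inl hpq⟩, Or.inl ⟨p, Or.inr hpq⟩⟩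
    obtain ⟨h1, h2⟩ := hI p q hpq
    by_cases htc : (q, p) ∈ tcS R
    · obtain ⟨u, hu, hv⟩ := h2 htc
      exact ⟨u, u, hu, hv, Relation.ReflTransGen.refl⟩
    · obtain ⟨u, v, hu, hv, htg⟩ := h1 htc
      exact ⟨u, v, hu, hv, htg.to_reflTransGen⟩
  -- reflexivity on suppPlus
  have hrefl : ∀ p ∈ suppPlus X R, (p, p) ∈ S := by
    intro p hp
    obtain ⟨v, hv⟩ := hdef p hp
    exact ⟨⟨v, v, hv, hv, Relation.ReflTransGen.refl⟩, hp, hp⟩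
  -- transitivity
  have htrans : isTransS S := by
    rintro p q r ⟨⟨u, v, hu, hv, hvu⟩, hp, hq⟩ ⟨⟨u', v', hu', hv', hvu'⟩, _, hr⟩
    have : u' = v := lcaIs_unique hu' hv
    subst this
    exact ⟨⟨u, v', hu, hv', hvu'.trans hvu⟩, hp, hr⟩
  -- cross consistency
  have hcc : crossCons S := by
    rintro a b c d x y ⟨q, habq⟩ ⟨⟨u1, m, hu1, hm, hmu1⟩, _, hxy⟩ ⟨⟨u2, m', hu2, hm', hmu2⟩, _, _⟩
    have hmm : m' = m := lcaIs_unique hm' hm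
    rw [hmm] at hmu2
    have hab : s(a, b) ∈ suppPlus X R := by
      rcases habq with h | h
      · exact h.2.1
      · exact h.2.2
    obtain ⟨w, hw⟩ := hdef _ hab
    have hcom : commonAnc E {z | z ∈ s(a, b)} m := by
      intro z hz
      rw [Set.mem_setOf_eq, Sym2.mem_iff] at hz
      rcases hz with rfl | rfl
      · exact hmu1.trans (lcaIs_commonAnc hu1 z (Sym2.mem_mk_left z c))
      · exact hmu2.trans (lcaIs_commonAnc hu2 z (Sym2.mem_mk_left z d))
    exact ⟨⟨w, m, hw, hm, lca_below_commonAnc E hacyc hw hcom⟩, hab, hxy⟩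
  -- F-conditional symmetry
  have hsym : fcsym F S := by
    rintro p q hFpq ⟨⟨u, v, hu, hv, hvu⟩, hp, hq⟩
    have : ¬ Relation.TransGen E v u := hcF p q ⟨hFpq, hp, hq⟩ u v hu hv
    have huv : v = u := by
      rcases (Relation.reflTransGen_iff_eq_or_transGen.mp hvu) with h | h
      · exact h.symm
      · exact absurd h this
    subst huv
    exact ⟨⟨v, v, hv, hu, Relation.ReflTransGen.refl⟩, hq, hp⟩
  have hclS : clF X F R ⊆ S :=
    Set.sInter_subset_of_mem ⟨hRS, hrefl, htrans, hcc, hsym⟩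
  have hclT : clF X F R ⊆ T := fun pq h => hSsub (hclS h)
  exact ⟨fun p q h => hclT h, hclT⟩
end

section
/- Let (R, F) be a pair of relations on P₂(X) and define R^lca := R ∪ {(ab, ab) : ab ∈ supp_F}. Then a DAG G RF^lca-realizes (R, F) if and only if G RF-realizes (R^lca, F). -/
/-- Condition (F^lca): for all `(ab,cd) ∈ F`, both LCAs are well-defined and
`lca(ab)` is not a proper descendant of `lca(cd)`. -/
def condFlca {V : Type*} (E : V → V → Prop) (F : Set (Sym2 V × Sym2 V)) : Prop :=
  ∀ p q, (p, q) ∈ F → lcaDef E p ∧ lcaDef E q ∧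
    ∀ u v, lcaIs E p u → lcaIs E q v → ¬ Relation.TransGen E v u


/-- `R^lca` is `R ∪ diagOn (suppS F)`. -/
def diagOn {α : Type*} (S : Set α) : Set (α × α) := {pq | pq.1 = pq.2 ∧ pq.1 ∈ S}

theorem mem_diagOn {α : Type*} {S : Set α} {p q : α} : (p, q) ∈ diagOn S ↔ p = q ∧ p ∈ S :=
  Iff.rfl

section Closure

variable {α : Type*} {R R' : Set (α × α)} {S : Set α} {p q : α}

theorem tcS_mono (h : R ⊆ R') : tcS R ⊆ tcS R' :=
  fun _ hpq => Relation.TransGen.mono (fun _ _ hab => h hab) _ _ hpq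

theorem mem_tcS_of_mem (h : (p, q) ∈ R) : (p, q) ∈ tcS R :=
  Relation.TransGen.single h

theorem mem_tcS_union_diagOn (h : (p, q) ∈ tcS (R ∪ diagOn S)) :
    (p, q) ∈ tcS R ∨ (p = q ∧ p ∈ S) := by
  change Relation.TransGen _ p q at h
  induction h with
  | single hpq =>
    rcases hpq with hpq | hpq
    · exact Or.inl (mem_tcS_of_mem hpq)
    · exact Or.inr (mem_diagOn.1 hpq)
  | tail _ hbc ih =>
    rcases hbc with hbc | hbc
    · rcases ih with ih | ⟨rfl, -⟩
      · exact Or.inl (Relation.TransGen.tail ih hbc)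
      · exact Or.inl (mem_tcS_of_mem hbc)
    · obtain ⟨rfl, -⟩ := mem_diagOn.1 hbc
      exact ih

theorem suppS_union_diagOn : suppS (R ∪ diagOn S) = suppS R ∪ S := by
  ext p
  constructor
  · rintro ⟨q, (h | h) | (h | h)⟩
    exacts [Or.inl ⟨q, Or.inl h⟩, Or.inr (mem_diagOn.1 h).2, Or.inl ⟨q, Or.inr h⟩,
      Or.inr ((mem_diagOn.1 h).1 ▸ (mem_diagOn.1 h).2)]
  · rintro (⟨q, h | h⟩ | hp)
    exacts [⟨q, Or.inl (Or.inl h)⟩, ⟨q, Or.inr (Or.inl h)⟩, ⟨p, Or.inl (Or.inr ⟨rfl, hp⟩)⟩]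

end Closure

section Realization

variable {V : Type*} {E : V → V → Prop} {X : Set V} {R F : Set (Sym2 V × Sym2 V)}
  {S : Set (Sym2 V)}

theorem suppPlus_union_diagOn : suppPlus X (R ∪ diagOn S) = suppPlus X R ∪ S := by
  rw [suppPlus, suppPlus, suppS_union_diagOn, Set.union_right_comm]

theorem realizes_union_diagOn_iff :
    realizes E X (R ∪ diagOn S) ↔ realizes E X R ∧ ∀ p ∈ S, lcaDef E p := by
  have hdef : (∀ p ∈ suppPlus X (R ∪ diagOn S), lcaDef E p) ↔
      (∀ p ∈ suppPlus X R, lcaDef E p) ∧ ∀ p ∈ S, lcaDef E p := by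
    rw [suppPlus_union_diagOn]
    exact forall₂_or_left
  rw [realizes, realizes, hdef]
  constructor
  · rintro ⟨⟨hdefR, hdefS⟩, hI⟩
    refine ⟨⟨hdefR, fun p q hpq => ⟨fun hqp => ?_, fun hqp => ?_⟩⟩, hdefS⟩
    · refine (hI p q (Or.inl hpq)).1 fun hqp' => hqp ?_
      -- a loop `(p, p)` coming from `diagOn S` is already in `tcS R` because `(p, q) ∈ R`
      rcases mem_tcS_union_diagOn hqp' with h | ⟨rfl, -⟩
      exacts [h, mem_tcS_of_mem hpq]
    · exact (hI p q (Or.inl hpq)).2 (tcS_mono Set.subset_union_left hqp)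
  · rintro ⟨⟨hdefR, hI⟩, hdefS⟩
    refine ⟨⟨hdefR, hdefS⟩, ?_⟩
    rintro p q (hpq | hpq)
    · refine ⟨fun hqp => (hI p q hpq).1 fun h => hqp (tcS_mono Set.subset_union_left h),
        fun hqp => ?_⟩
      rcases mem_tcS_union_diagOn hqp with h | ⟨rfl, -⟩
      · exact (hI p q hpq).2 h
      · obtain ⟨u, hu⟩ := hdefR q (Or.inl ⟨q, Or.inl hpq⟩)
        exact ⟨u, hu, hu⟩
    · obtain ⟨rfl, hp⟩ := mem_diagOn.1 hpq
      obtain ⟨u, hu⟩ := hdefS p hp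
      exact ⟨fun hpp => absurd (mem_tcS_of_mem (Or.inr ⟨rfl, hp⟩)) hpp, fun _ => ⟨u, hu, hu⟩⟩

theorem condFlca_iff : condFlca E F ↔ condF E F ∧ ∀ p ∈ suppS F, lcaDef E p := by
  constructor
  · intro h
    refine ⟨fun p q hpq => (h p q hpq).2.2, ?_⟩
    rintro p ⟨q, hpq | hqp⟩
    exacts [(h p q hpq).1, (h q p hqp).2.1]
  · rintro ⟨hF, hdef⟩ p q hpq
    exact ⟨hdef p ⟨q, Or.inl hpq⟩, hdef q ⟨p, Or.inr hpq⟩, hF p q hpq⟩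

end Realization

theorem stmt15_general {V : Type*} (E : V → V → Prop) (X : Set V)
    (R F : Set (Sym2 V × Sym2 V)) :
    (realizes E X R ∧ condFlca E F) ↔
      rfRealizes E X (R ∪ {pq : Sym2 V × Sym2 V | pq.1 = pq.2 ∧ pq.1 ∈ suppS F}) F := by
  change _ ↔ realizes E X (R ∪ diagOn (suppS F)) ∧ _
  rw [realizes_union_diagOn_iff, condFlca_iff]
  tauto

/-- with `R^lca := R ∪ {(ab,ab) : ab ∈ supp_F}`, a DAG `G`
RF^lca-realizes `(R, F)` iff `G` RF-realizes `(R^lca, F)`. -/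
theorem stmt15 {V : Type*} [Finite V] (E : V → V → Prop) (X : Set V)
    (hacyc : dagAcyclic E) (hX : ∀ v, v ∈ X ↔ dagLeaf E v)
    (R F : Set (Sym2 V × Sym2 V)) (hR : onP2 X R) (hF : onP2 X F) :
    (realizes E X R ∧ condFlca E F) ↔
      rfRealizes E X (R ∪ {pq : Sym2 V × Sym2 V | pq.1 = pq.2 ∧ pq.1 ∈ suppS F}) F :=
  stmt15_general E X R F
end
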